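/- Let ρ be a density matrix on ℂ^d⊗ℂ^d with Schmidt number s(ρ) ≤ r. Then there exist finitely many probabilities p_k (p_k ≥ 0, Σ_k p_k = 1) and pure states |ψ_k⟩ ∈ ℂ^d⊗ℂ^d of Schmidt rank ≤ r such that the matrix Γ_ρ − Σ_k p_k Γ_{ψ_k} is positive semidefinite, where Γ_{ψ_k} is the covariance matrix of the state |ψ_k⟩⟨ψ_k| for the same canonical observable bases. -/

import Mathlib

/-!
The covariance matrix is concave in the state. If `ρ = ∑ₖ pₖ |ψₖ⟩⟨ψₖ|` is a decomposition
witnessing `s(ρ) ≤ r`, take the same weights and states: entrywise, the defect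
`Γ_ρ - ∑ₖ pₖ Γ_{ψₖ}` is `∑ₖ pₖ δₖ δₖᵀ` with `δₖ = ⟨M⟩_{ψₖ} - ⟨M⟩_ρ`, because the
symmetrized second moments are linear in the state and the weighted identity
`∑ₖ pₖ (aₖ - ā)(bₖ - b̄) = ∑ₖ pₖ aₖ bₖ - ā b̄` absorbs the products of means.
A sum of rank-one positive matrices with nonnegative weights is positive semidefinite.
-/

open Matrix Kronecker BigOperators Finset
open scoped ComplexOrder

/-- Expectation value ⟨A⟩_ρ = Re tr(ρ A). -/
noncomputable def expval {n : Type*} [Fintype n] (ρ A : Matrix n n ℂ) : ℝ :=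
  ((ρ * A).trace).re

/-- A density matrix: positive semidefinite with unit trace. -/
def IsDensityMatrix {n : Type*} [Fintype n] (ρ : Matrix n n ℂ) : Prop :=
  ρ.PosSemidef ∧ ρ.trace = 1

/-- The projector |v⟩⟨v| associated to a vector. -/
noncomputable def pureState {n : Type*} (v : n → ℂ) : Matrix n n ℂ :=
  Matrix.vecMulVec v (star v)

/-- A normalized vector. -/
def IsUnitVec {n : Type*} [Fintype n] (v : n → ℂ) : Prop :=
  ∑ i, Complex.normSq (v i) = 1

/-- The canonical Hermitian operator basis of ℂ^d, indexed by pairs (j,k):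
diagonal operators for j = k, real operators for j < k, imaginary operators for j > k. -/
noncomputable def canonG (d : ℕ) : Fin d × Fin d → Matrix (Fin d) (Fin d) ℂ := fun μ =>
  if μ.1 = μ.2 then Matrix.single μ.1 μ.1 1
  else if μ.1 < μ.2 then
    ((Real.sqrt 2 : ℂ))⁻¹ • (Matrix.single μ.1 μ.2 1 + Matrix.single μ.2 μ.1 1)
  else
    (Complex.I * ((Real.sqrt 2 : ℂ))⁻¹) •
      (Matrix.single μ.2 μ.1 1 - Matrix.single μ.1 μ.2 1)

/-- Covariance matrix of a family of observables w.r.t. a state ρ. -/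
noncomputable def covMat {n K : Type*} [Fintype n] (ρ : Matrix n n ℂ)
    (M : K → Matrix n n ℂ) : Matrix K K ℝ :=
  Matrix.of fun j k =>
    (1/2 : ℝ) * expval ρ (M j * M k + M k * M j) - expval ρ (M j) * expval ρ (M k)

/-- The local observables (g_μ ⊗ 1, 1 ⊗ g_ν) on the bipartite space. -/
noncomputable def bipObs (d : ℕ) :
    (Fin d × Fin d) ⊕ (Fin d × Fin d) → Matrix (Fin d × Fin d) (Fin d × Fin d) ℂ :=
  Sum.elim (fun μ => canonG d μ ⊗ₖ (1 : Matrix (Fin d) (Fin d) ℂ))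
           (fun ν => (1 : Matrix (Fin d) (Fin d) ℂ) ⊗ₖ canonG d ν)

/-- The full covariance matrix Γ_ρ of the canonical bipartite observables. -/
noncomputable def GammaCM (d : ℕ) (ρ : Matrix (Fin d × Fin d) (Fin d × Fin d) ℂ) :
    Matrix ((Fin d × Fin d) ⊕ (Fin d × Fin d)) ((Fin d × Fin d) ⊕ (Fin d × Fin d)) ℝ :=
  covMat ρ (bipObs d)

/-- The cross-covariance block X_ρ. -/
noncomputable def crossCov (d : ℕ) (ρ : Matrix (Fin d × Fin d) (Fin d × Fin d) ℂ) :
    Matrix (Fin d × Fin d) (Fin d × Fin d) ℝ :=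
  Matrix.of fun μ ν =>
    expval ρ (canonG d μ ⊗ₖ canonG d ν)
      - expval ρ (canonG d μ ⊗ₖ 1) * expval ρ ((1 : Matrix (Fin d) (Fin d) ℂ) ⊗ₖ canonG d ν)

/-- Reduced state on the first subsystem. -/
noncomputable def redA (d : ℕ) (ρ : Matrix (Fin d × Fin d) (Fin d × Fin d) ℂ) :
    Matrix (Fin d) (Fin d) ℂ :=
  Matrix.of fun i j => ∑ k, ρ (i, k) (j, k)

/-- Reduced state on the second subsystem. -/
noncomputable def redB (d : ℕ) (ρ : Matrix (Fin d × Fin d) (Fin d × Fin d) ℂ) :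
    Matrix (Fin d) (Fin d) ℂ :=
  Matrix.of fun i j => ∑ k, ρ (k, i) (k, j)

/-- Purity tr(σ²) (real part). -/
noncomputable def purity {n : Type*} [Fintype n] (σ : Matrix n n ℂ) : ℝ :=
  ((σ * σ).trace).re

/-- Trace norm of a real matrix: sum of its singular values, i.e. tr √(XᵀX). -/
noncomputable def traceNorm {n : Type*} [Fintype n] [DecidableEq n] (X : Matrix n n ℝ) : ℝ :=
  ((Matrix.posSemidef_conjTranspose_mul_self X).1.eigenvectorUnitary.1 *
    Matrix.diagonal ((RCLike.ofReal : ℝ → ℝ) ∘ (Real.sqrt ·) ∘ (Matrix.posSemidef_conjTranspose_mul_self X).1.eigenvalues) *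
    (star (Matrix.posSemidef_conjTranspose_mul_self X).1.eigenvectorUnitary : Matrix n n ℝ)).trace

/-- Schmidt rank of a pure state vector is the rank of its coefficient matrix. -/
def SchmidtRankLE (d r : ℕ) (v : Fin d × Fin d → ℂ) : Prop :=
  (Matrix.of fun j k : Fin d => v (j, k)).rank ≤ r

/-- Schmidt number at most r. -/
def SchmidtNumberLE (d r : ℕ) (ρ : Matrix (Fin d × Fin d) (Fin d × Fin d) ℂ) : Prop :=
  ∃ (n : ℕ) (p : Fin n → ℝ) (ψ : Fin n → (Fin d × Fin d → ℂ)),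
    (∀ k, 0 ≤ p k) ∧ (∑ k, p k = 1) ∧ (∀ k, IsUnitVec (ψ k)) ∧
    (∀ k, SchmidtRankLE d r (ψ k)) ∧
    ρ = ∑ k, (p k : ℂ) • pureState (ψ k)

section Mixture

variable {n K ι : Type*} [Fintype n] [Fintype ι]

noncomputable def meanVec (σ : Matrix n n ℂ) (M : K → Matrix n n ℂ) : K → ℝ :=
  fun j => expval σ (M j)

lemma expval_sum_smul (p : ι → ℝ) (σ : ι → Matrix n n ℂ) (A : Matrix n n ℂ) :
    expval (∑ k, (p k : ℂ) • σ k) A = ∑ k, p k * expval (σ k) A := by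
  simp only [expval, Finset.sum_mul, Matrix.trace_sum, Complex.re_sum, Matrix.smul_mul,
    Matrix.trace_smul, smul_eq_mul, Complex.re_ofReal_mul]

lemma sum_mul_sub_mean_mul_sub_mean (p : ι → ℝ) (hp : ∑ k, p k = 1) (a b : ι → ℝ) :
    ∑ k, p k * ((a k - ∑ l, p l * a l) * (b k - ∑ l, p l * b l))
      = ∑ k, p k * (a k * b k) - (∑ k, p k * a k) * (∑ k, p k * b k) := by
  set A := ∑ l, p l * a l
  set B := ∑ l, p l * b l
  calc ∑ k, p k * ((a k - A) * (b k - B))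
      = ∑ k, p k * (a k * b k) - (∑ k, p k * a k) * B - A * ∑ k, p k * b k
          + (∑ k, p k) * (A * B) := by
        simp only [Finset.sum_mul, Finset.mul_sum, ← Finset.sum_sub_distrib,
          ← Finset.sum_add_distrib]
        exact Finset.sum_congr rfl fun k _ => by ring
    _ = _ := by rw [hp]; ring

lemma covMat_sum_smul_sub_sum_smul_covMat (p : ι → ℝ) (hp : ∑ k, p k = 1)
    (σ : ι → Matrix n n ℂ) (M : K → Matrix n n ℂ) :
    covMat (∑ k, (p k : ℂ) • σ k) M - ∑ k, p k • covMat (σ k) M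
      = ∑ k, p k • vecMulVec (meanVec (σ k) M - meanVec (∑ l, (p l : ℂ) • σ l) M)
          (meanVec (σ k) M - meanVec (∑ l, (p l : ℂ) • σ l) M) := by
  ext j j'
  simp only [Matrix.sub_apply, Matrix.sum_apply, Matrix.smul_apply, covMat, Matrix.of_apply,
    vecMulVec_apply, Pi.sub_apply, meanVec, smul_eq_mul, expval_sum_smul,
    sum_mul_sub_mean_mul_sub_mean p hp]
  simp only [mul_sub, Finset.sum_sub_distrib, Finset.mul_sum, mul_left_comm (p _)]
  ring

lemma posSemidef_covMat_sum_smul_sub_sum_smul_covMat [Fintype K] {p : ι → ℝ}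
    (hp_nonneg : ∀ k, 0 ≤ p k) (hp : ∑ k, p k = 1) (σ : ι → Matrix n n ℂ)
    (M : K → Matrix n n ℂ) :
    (covMat (∑ k, (p k : ℂ) • σ k) M - ∑ k, p k • covMat (σ k) M).PosSemidef := by
  rw [covMat_sum_smul_sub_sum_smul_covMat p hp]
  refine posSemidef_sum _ fun k _ => .smul ?_ (hp_nonneg k)
  simpa only [star_trivial] using
    posSemidef_vecMulVec_self_star (meanVec (σ k) M - meanVec (∑ l, (p l : ℂ) • σ l) M)

end Mixture

theorem schmidt_number_covariance_matrix_criterion_general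
    (d r : ℕ) (ρ : Matrix (Fin d × Fin d) (Fin d × Fin d) ℂ)
    (hs : SchmidtNumberLE d r ρ) :
    ∃ (n : ℕ) (p : Fin n → ℝ) (ψ : Fin n → (Fin d × Fin d → ℂ)),
      (∀ k, 0 ≤ p k) ∧ (∑ k, p k = 1) ∧ (∀ k, IsUnitVec (ψ k)) ∧
      (∀ k, SchmidtRankLE d r (ψ k)) ∧
      (GammaCM d ρ - ∑ k, p k • GammaCM d (pureState (ψ k))).PosSemidef := by
  obtain ⟨n, p, ψ, hp_nonneg, hp, hψ_unit, hψ_rank, rfl⟩ := hs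
  exact ⟨n, p, ψ, hp_nonneg, hp, hψ_unit, hψ_rank,
    posSemidef_covMat_sum_smul_sub_sum_smul_covMat hp_nonneg hp _ (bipObs d)⟩

/-- For a density matrix ρ on ℂ^d ⊗ ℂ^d with Schmidt number ≤ r, there exist
probabilities p_k and pure states ψ_k of Schmidt rank ≤ r such that
Γ_ρ - Σ_k p_k Γ_{ψ_k} is positive semidefinite. -/
theorem schmidt_number_covariance_matrix_criterion
    (d r : ℕ) (ρ : Matrix (Fin d × Fin d) (Fin d × Fin d) ℂ)
    (hρ : IsDensityMatrix ρ) (hs : SchmidtNumberLE d r ρ) :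
    ∃ (n : ℕ) (p : Fin n → ℝ) (ψ : Fin n → (Fin d × Fin d → ℂ)),
      (∀ k, 0 ≤ p k) ∧ (∑ k, p k = 1) ∧ (∀ k, IsUnitVec (ψ k)) ∧
      (∀ k, SchmidtRankLE d r (ψ k)) ∧
      (GammaCM d ρ - ∑ k, p k • GammaCM d (pureState (ψ k))).PosSemidef :=
  schmidt_number_covariance_matrix_criterion_general d r ρ hs
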